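/- Let n ≥ 2 and r ≥ 1 be integers. Let p_0, p_1, …, p_r be diagonal n×n complex matrices such that the diagonal entries of p_0 are pairwise distinct. Suppose ω_0, ω_1, …, ω_r are n×n complex matrices satisfying Σ_{j=0}^{k} [p_j, ω_{k−j}] = 0 for every 0 ≤ k ≤ r−1 and Σ_{j=0}^{r} [p_j, ω_{r−j}] = (r+1)·ω_0. Then ω_0 = 0 and ω_k is a diagonal matrix for every 0 ≤ k ≤ r. -/

import Mathlib

/-!
Diagonal matrices commute, and a diagonal matrix with pairwise distinct diagonal entries
commutes only with diagonal matrices. Hence, by strong induction, the `k`-th relation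
collapses to `[p₀, ω_k] = 0` and `ω_k` is diagonal for `k < r`. The last relation then reads
`[p₀, ω_r] = (r + 1) ω₀`; the left side has zero diagonal and `ω₀` is diagonal, so `ω₀ = 0`,
and `ω_r` commutes with `p₀`.
-/

namespace Matrix

variable {ι R : Type*} [Fintype ι] [DecidableEq ι] [CommRing R]

theorem IsDiag.commute {A B : Matrix ι ι R} (hA : A.IsDiag) (hB : B.IsDiag) : Commute A B := by
  rw [← hA.diagonal_diag, ← hB.diagonal_diag]
  exact commute_diagonal _ _

theorem IsDiag.mul_sub_mul_apply {P : Matrix ι ι R} (hP : P.IsDiag) (A : Matrix ι ι R)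
    (a b : ι) : (P * A - A * P) a b = (P a a - P b b) * A a b := by
  obtain ⟨d, rfl⟩ : ∃ d, P = diagonal d := ⟨_, hP.diagonal_diag.symm⟩
  simp only [sub_apply, diagonal_mul, mul_diagonal, diagonal_apply_eq]
  ring

theorem IsDiag.of_mul_sub_mul_eq_zero [NoZeroDivisors R] {P A : Matrix ι ι R} (hP : P.IsDiag)
    (hdist : ∀ a b, a ≠ b → P a a ≠ P b b) (h : P * A - A * P = 0) : A.IsDiag := by
  intro a b hab
  have hab' := congr_fun₂ h a b
  rw [hP.mul_sub_mul_apply, zero_apply] at hab'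
  exact (mul_eq_zero.mp hab').resolve_left (sub_ne_zero.mpr (hdist a b hab))

theorem IsDiag.eq_zero_of_mul_sub_mul_eq_smul [NoZeroDivisors R] {P A B : Matrix ι ι R} {c : R}
    (hP : P.IsDiag) (hA : A.IsDiag) (h : P * B - B * P = c • A) (hc : c ≠ 0) : A = 0 := by
  ext a b
  by_cases hab : a = b
  · subst hab
    have haa := congr_fun₂ h a a
    rw [hP.mul_sub_mul_apply, sub_self, zero_mul, smul_apply, smul_eq_mul] at haa
    exact (mul_eq_zero.mp haa.symm).resolve_left hc
  · exact hA hab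

theorem sum_range_mul_sub_mul_eq_of_isDiag {p ω : ℕ → Matrix ι ι R} {k : ℕ}
    (hp : ∀ j, 1 ≤ j → j ≤ k → (p j).IsDiag) (hω : ∀ i < k, (ω i).IsDiag) :
    ∑ j ∈ Finset.range (k + 1), (p j * ω (k - j) - ω (k - j) * p j) = p 0 * ω k - ω k * p 0 := by
  rw [Finset.sum_range_succ', Finset.sum_eq_zero, zero_add, Nat.sub_zero]
  intro j hj
  rw [Finset.mem_range] at hj
  exact sub_eq_zero.mpr ((hp (j + 1) (by omega) (by omega)).commute (hω _ (by omega))).eq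

end Matrix

open Matrix

theorem stmt1_general (n r : ℕ) (hr : 1 ≤ r)
    (p ω : ℕ → Matrix (Fin n) (Fin n) ℂ)
    (hpdiag : ∀ j, j ≤ r → (p j).IsDiag)
    (hpdist : ∀ a b : Fin n, a ≠ b → p 0 a a ≠ p 0 b b)
    (hlow : ∀ k, k < r →
      ∑ j ∈ Finset.range (k + 1), (p j * ω (k - j) - ω (k - j) * p j) = 0)
    (htop : ∑ j ∈ Finset.range (r + 1), (p j * ω (r - j) - ω (r - j) * p j)
      = ((r : ℂ) + 1) • ω 0) :
    ω 0 = 0 ∧ ∀ k, k ≤ r → (ω k).IsDiag := by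
  have hp0 := hpdiag 0 r.zero_le
  have hsum : ∀ k ≤ r, (∀ i < k, (ω i).IsDiag) →
      ∑ j ∈ Finset.range (k + 1), (p j * ω (k - j) - ω (k - j) * p j) = p 0 * ω k - ω k * p 0 :=
    fun k hk hω => sum_range_mul_sub_mul_eq_of_isDiag (fun j _ hj => hpdiag j (hj.trans hk)) hω
  have hlowdiag : ∀ k < r, (ω k).IsDiag := by
    intro k
    induction k using Nat.strong_induction_on with
    | _ k ih =>
      intro hk
      refine hp0.of_mul_sub_mul_eq_zero hpdist ?_
      rw [← hsum k hk.le fun i hi => ih i hi (hi.trans hk)]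
      exact hlow k hk
  have htop' : p 0 * ω r - ω r * p 0 = ((r : ℂ) + 1) • ω 0 := by
    rw [← hsum r le_rfl hlowdiag]
    exact htop
  have hω0 : ω 0 = 0 :=
    hp0.eq_zero_of_mul_sub_mul_eq_smul (hlowdiag 0 hr) htop' (Nat.cast_add_one_ne_zero r)
  refine ⟨hω0, fun k hk => hk.lt_or_eq.elim (hlowdiag k) ?_⟩
  rintro rfl
  exact hp0.of_mul_sub_mul_eq_zero hpdist (by rw [htop', hω0, smul_zero])

/-- The inductive content of the proof of Lemma 1 of the paper: if the diagonal
matrices `p 0, …, p r` (with `p 0` having pairwise distinct diagonal entries) and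
arbitrary matrices `ω 0, …, ω r` satisfy `∑_{j≤k} [p j, ω (k-j)] = 0` for `k < r`
and `∑_{j≤r} [p j, ω (r-j)] = (r+1) ω 0`, then `ω 0 = 0` and each `ω k` is diagonal. -/
theorem stmt1 (n r : ℕ) (hn : 2 ≤ n) (hr : 1 ≤ r)
    (p ω : ℕ → Matrix (Fin n) (Fin n) ℂ)
    (hpdiag : ∀ j, j ≤ r → (p j).IsDiag)
    (hpdist : ∀ a b : Fin n, a ≠ b → p 0 a a ≠ p 0 b b)
    (hlow : ∀ k, k < r →
      ∑ j ∈ Finset.range (k + 1), (p j * ω (k - j) - ω (k - j) * p j) = 0)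
    (htop : ∑ j ∈ Finset.range (r + 1), (p j * ω (r - j) - ω (r - j) * p j)
      = ((r : ℂ) + 1) • ω 0) :
    ω 0 = 0 ∧ ∀ k, k ≤ r → (ω k).IsDiag :=
  stmt1_general n r hr p ω hpdiag hpdist hlow htop
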